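/- arXiv:1603.00237 — 7 statements merged into one kernel-verified Lean document; each statement's English description precedes it below -/
import Mathlib

section
/- There exists a unique formal power series g(u) = 1 + \sum_{i\ge 1} g_i u^{-i} with complex coefficients satisfying the functional relation g(u+N) = g(u)(1 - u^{-2}), where the shift u \mapsto u+N is interpreted via re-expansion of the formal series in u^{-1}. -/
/-! The relation `g(u+N) = g(u)(1 - u⁻²)` read at `u^{-(m+2)}` gives
`N (m+1) g_{m+1} = g_m + ∑_{i ≤ m} (-N)^{m+2-i} C(m+1, m+2-i) g_i`, a recursion that determines
`g_{m+1}` from `g_0, …, g_m` since `N ≠ 0`; with `g_0 = 1` the series exists and is unique. -/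

/- Formal power series in `u⁻¹` are modelled as `PowerSeries ℂ`, with `X = u⁻¹`.
The shift `f(u) ↦ f(u+a)` is defined by re-expansion:
`(u+a)^{-i} = ∑_{k≥0} (-a)^k C(i+k-1,k) u^{-i-k}`. -/
noncomputable def shiftPS (a : ℂ) (f : PowerSeries ℂ) : PowerSeries ℂ :=
  PowerSeries.mk fun n =>
    ∑ i ∈ Finset.range (n + 1),
      (PowerSeries.coeff i f) * (-a) ^ (n - i) * ((n - 1).choose (n - i) : ℂ)

open PowerSeries

section StrongRec

variable {α : Type*}

def strongRecSeq (x₀ : α) (F : (n : ℕ) → (Fin (n + 1) → α) → α) : ℕ → α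
  | 0 => x₀
  | n + 1 => F n fun i => strongRecSeq x₀ F i

theorem existsUnique_seq_of_strongRec (x₀ : α) (F : (n : ℕ) → (Fin (n + 1) → α) → α) :
    ∃! x : ℕ → α, x 0 = x₀ ∧ ∀ n, x (n + 1) = F n fun i => x i := by
  refine ⟨strongRecSeq x₀ F, ⟨by rw [strongRecSeq], fun n => by rw [strongRecSeq]⟩, ?_⟩
  rintro y ⟨hy₀, hy⟩
  funext n
  induction n using Nat.strong_induction_on with
  | _ n ih =>
    cases n with
    | zero => rw [strongRecSeq]; exact hy₀
    | succ n =>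
      rw [hy, strongRecSeq]
      exact congrArg (F n) (funext fun i => ih i (by omega))

end StrongRec

theorem coeff_mul_one_sub_X_sq_add_two {R : Type*} [CommRing R] (g : R⟦X⟧) (m : ℕ) :
    coeff (m + 2) (g * (1 - X ^ 2)) = coeff (m + 2) g - coeff m g := by
  rw [mul_sub, mul_one, map_sub, coeff_mul_X_pow]

theorem coeff_mul_one_sub_X_sq_of_lt_two {R : Type*} [CommRing R] (g : R⟦X⟧) {n : ℕ}
    (hn : n < 2) :
    coeff n (g * (1 - X ^ 2)) = coeff n g := by
  rw [mul_sub, mul_one, map_sub, coeff_mul_X_pow', if_neg (by omega), sub_zero]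

section Shift

variable (a : ℂ) (g : PowerSeries ℂ)

theorem coeff_shiftPS_zero : coeff 0 (shiftPS a g) = coeff 0 g := by
  simp [shiftPS]

theorem coeff_shiftPS_one : coeff 1 (shiftPS a g) = coeff 1 g := by
  simp [shiftPS, Finset.sum_range_succ]

theorem coeff_shiftPS_add_two (m : ℕ) :
    coeff (m + 2) (shiftPS a g) = coeff (m + 2) g - a * (m + 1) * coeff (m + 1) g +
      ∑ i ∈ Finset.range (m + 1),
        coeff i g * (-a) ^ (m + 2 - i) * ((m + 1).choose (m + 2 - i)) := by
  rw [shiftPS, coeff_mk, Finset.sum_range_succ, Finset.sum_range_succ,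
    show m + 2 - (m + 1) = 1 by omega, Nat.sub_self, show m + 2 - 1 = m + 1 by omega,
    Nat.choose_one_right, Nat.choose_zero_right]
  push_cast
  ring

/-- `g_{m+1}` as forced by the coefficient of `u^{-(m+2)}` in `g(u+a) = g(u)(1 - u⁻²)`. -/
noncomputable def shiftRec (m : ℕ) (x : Fin (m + 1) → ℂ) : ℂ :=
  (x (Fin.last m) + ∑ i : Fin (m + 1), x i * (-a) ^ (m + 2 - i) * ((m + 1).choose (m + 2 - i)))
    / (a * (m + 1))

theorem shiftPS_eq_mul_one_sub_X_sq_iff (ha : a ≠ 0) :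
    shiftPS a g = g * (1 - X ^ 2) ↔ ∀ m, coeff (m + 1) g = shiftRec a m fun i => coeff i g := by
  have coeff_iff (m : ℕ) : coeff (m + 2) (shiftPS a g) = coeff (m + 2) (g * (1 - X ^ 2)) ↔
      coeff (m + 1) g = shiftRec a m fun i => coeff i g := by
    have hm : a * (m + 1) ≠ 0 := mul_ne_zero ha (by exact_mod_cast m.succ_ne_zero)
    rw [coeff_shiftPS_add_two, coeff_mul_one_sub_X_sq_add_two, shiftRec, eq_div_iff hm,
      Fin.val_last, Fin.sum_univ_eq_sum_range (fun i => coeff i g * (-a) ^ (m + 2 - i) *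
        ((m + 1).choose (m + 2 - i) : ℂ))]
    constructor <;> intro h <;> linear_combination -h
  refine ⟨fun h m => (coeff_iff m).mp (by rw [h]), fun h => ?_⟩
  ext (_ | _ | m)
  · rw [coeff_shiftPS_zero, coeff_mul_one_sub_X_sq_of_lt_two _ (by omega)]
  · rw [coeff_shiftPS_one, coeff_mul_one_sub_X_sq_of_lt_two _ (by omega)]
  · exact (coeff_iff m).mpr (h m)

end Shift

/-- There exists a unique formal power series `g(u) = 1 + ∑_{i≥1} g_i u^{-i}`
satisfying `g(u+N) = g(u)(1 - u^{-2})`. -/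
theorem exists_unique_g (N : ℕ) (hN : 0 < N) :
    ∃! g : PowerSeries ℂ,
      PowerSeries.constantCoeff g = 1 ∧
        shiftPS (N : ℂ) g = g * (1 - PowerSeries.X ^ 2) := by
  have hN' : (N : ℂ) ≠ 0 := by exact_mod_cast hN.ne'
  obtain ⟨c, ⟨hc₀, hc⟩, hc_unique⟩ := existsUnique_seq_of_strongRec (1 : ℂ) (shiftRec N)
  refine ⟨mk c, ⟨by rwa [← coeff_zero_eq_constantCoeff_apply, coeff_mk], ?_⟩, ?_⟩
  · simpa only [shiftPS_eq_mul_one_sub_X_sq_iff _ _ hN', coeff_mk] using hc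
  · rintro g ⟨hg₀, hg⟩
    rw [shiftPS_eq_mul_one_sub_X_sq_iff _ _ hN'] at hg
    have hgc : (fun n => coeff n g) = c :=
      hc_unique _ ⟨by simpa only [coeff_zero_eq_constantCoeff_apply] using hg₀, hg⟩
    ext n
    rw [coeff_mk, ← hgc]
end

section
/- If g(u) = 1 + \sum_{i\ge 1} g_i u^{-i} is the unique formal power series satisfying g(u+N) = g(u)(1-u^{-2}), then g(u) g(-u) (1 - u^{-2}) = 1, i.e. the unitarity property g(u)(1-u^{-1}) \cdot g(-u)(1+u^{-1}) = 1 holds. -/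
/-!
The shift `f(u) ↦ f(u + a)` is substitution of `(u + a)⁻¹ = X / (1 + a X)` for `X`, so it is
a ring endomorphism, shifts compose additively, and the sign change `u ↦ -u` conjugates the shift
by `a` into the shift by `-a`. Hence `G(u) = g(-u)` satisfies `G(u - N) = G(u)(1 - u⁻²)`, i.e.
`G(u + N)(1 - (u + N)⁻²) = G(u)`, and `F = g(u) G(u) (1 - u⁻²)` is invariant under the shift by
`N`. Comparing coefficients of `u^{-(m+1)}` in `F(u + N) = F(u)` gives inductively `N m F_m = 0`
for `m ≥ 1`, so `F` is its constant term `1`.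
-/

open PowerSeries

namespace PowerSeries

theorem constantCoeff_rescale {R : Type*} [CommSemiring R] (c : R) (f : R⟦X⟧) :
    constantCoeff (rescale c f) = constantCoeff f := by
  rw [← coeff_zero_eq_constantCoeff_apply, coeff_rescale, pow_zero, one_mul,
    coeff_zero_eq_constantCoeff_apply]

variable {R : Type*} [CommRing R]

/-- `X / (1 + a X)`, i.e. `(u + a)⁻¹` in the variable `X = u⁻¹`. -/
noncomputable def shiftX (a : R) : R⟦X⟧ := X * rescale (-a) (mk 1)

theorem hasSubst_shiftX (a : R) : HasSubst (shiftX a) :=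
  HasSubst.of_constantCoeff_zero' (by simp [shiftX])

theorem shiftX_zero : shiftX (0 : R) = X := by
  simp [shiftX]

theorem shiftX_mul_one_add_smul_X (a : R) : shiftX a * (1 + a • X) = X := by
  have h : rescale (-a) (1 - X : R⟦X⟧) = 1 + a • X := by
    simp [rescale_X, smul_eq_C_mul, sub_eq_add_neg]
  rw [shiftX, ← h, mul_assoc, ← map_mul, mk_one_mul_one_sub_eq_one, map_one, mul_one]

theorem coeff_shiftX_pow (a : R) {k n : ℕ} (hkn : k ≤ n) :
    coeff n (shiftX a ^ k) = (-a) ^ (n - k) * (n - 1).choose (n - k) := by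
  rcases k with _ | d
  · rcases n with _ | n <;> simp [coeff_one]
  · rw [shiftX, mul_pow, ← map_pow, mk_one_pow_eq_mk_choose_add, rescale_mk, coeff_X_pow_mul',
      if_pos hkn, coeff_mk, show d + (n - (d + 1)) = n - 1 by omega,
      Nat.choose_symm_of_eq_add (show n - 1 = d + (n - (d + 1)) by omega)]

theorem coeff_shiftX_pow_of_lt (a : R) {k n : ℕ} (hnk : n < k) :
    coeff n (shiftX a ^ k) = 0 := by
  rw [shiftX, mul_pow, coeff_X_pow_mul', if_neg (by omega)]

theorem subst_shiftX_shiftX (a b : R) : (shiftX a).subst (shiftX b) = shiftX (a + b) := by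
  have hunit : IsUnit (1 + (a + b) • X : R⟦X⟧) := by
    simp [isUnit_iff_constantCoeff]
  refine hunit.mul_left_injective ?_
  have ha := congrArg (substAlgHom (R := R) (hasSubst_shiftX b)) (shiftX_mul_one_add_smul_X a)
  simp only [map_mul, map_add, map_one, map_smul, substAlgHom_X, coe_substAlgHom] at ha
  have hb := shiftX_mul_one_add_smul_X b
  have hab := shiftX_mul_one_add_smul_X (a + b)
  simp only [smul_eq_C_mul, map_add] at ha hb hab ⊢
  -- `(1 + a shiftX b) (1 + b X) = 1 + (a + b) X`, so both sides times `1 + (a + b) X` are `X`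
  linear_combination (1 + C b * X) * ha + (1 - C a * subst (shiftX b) (shiftX a)) * hb - hab

theorem rescale_neg_one_shiftX (a : R) : rescale (-1) (shiftX a) = -shiftX (-a) := by
  simp [shiftX, rescale_rescale]

theorem rescale_neg_one_subst_shiftX (a : R) (f : R⟦X⟧) :
    rescale (-1) (f.subst (shiftX a)) = (rescale (-1) f).subst (shiftX (-a)) := by
  have hneg : HasSubst ((-1 : R) • X : R⟦X⟧) := HasSubst.smul_X' _
  rw [rescale_eq_subst, rescale_eq_subst, subst_comp_subst_apply (hasSubst_shiftX a) hneg,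
    subst_comp_subst_apply hneg (hasSubst_shiftX _), ← rescale_eq_subst, rescale_neg_one_shiftX,
    subst_smul (hasSubst_shiftX _), subst_X (hasSubst_shiftX _), neg_one_smul]

end PowerSeries

theorem shiftPS_eq_subst (a : ℂ) (f : ℂ⟦X⟧) : shiftPS a f = f.subst (shiftX a) := by
  ext n
  rw [coeff_subst' (hasSubst_shiftX a), finsum_eq_sum_of_support_subset (s := Finset.range (n + 1))]
  · simp only [shiftPS, coeff_mk, smul_eq_mul]
    refine Finset.sum_congr rfl fun i hi => ?_
    rw [coeff_shiftX_pow a (Finset.mem_range_succ_iff.mp hi), mul_assoc]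
  · intro d hd
    by_contra hdn
    simp only [Finset.coe_range, Set.mem_Iio, not_lt] at hdn
    exact hd (by simp only [coeff_shiftX_pow_of_lt a (show n < d by omega), smul_zero])

theorem shiftPS_mul (a : ℂ) (f g : ℂ⟦X⟧) : shiftPS a (f * g) = shiftPS a f * shiftPS a g := by
  simp only [shiftPS_eq_subst, subst_mul (hasSubst_shiftX a)]

theorem shiftPS_shiftPS (a b : ℂ) (f : ℂ⟦X⟧) : shiftPS b (shiftPS a f) = shiftPS (a + b) f := by
  simp only [shiftPS_eq_subst, subst_comp_subst_apply (hasSubst_shiftX a) (hasSubst_shiftX b),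
    subst_shiftX_shiftX]

theorem shiftPS_zero (f : ℂ⟦X⟧) : shiftPS 0 f = f := by
  rw [shiftPS_eq_subst, shiftX_zero, X_subst]

theorem rescale_neg_one_shiftPS (a : ℂ) (f : ℂ⟦X⟧) :
    rescale (-1) (shiftPS a f) = shiftPS (-a) (rescale (-1) f) := by
  rw [shiftPS_eq_subst, shiftPS_eq_subst, rescale_neg_one_subst_shiftX]

theorem coeff_succ_shiftPS (a : ℂ) (f : ℂ⟦X⟧) {m : ℕ}
    (hf : ∀ i, 1 ≤ i → i < m → coeff i f = 0) :
    coeff (m + 1) (shiftPS a f) = coeff (m + 1) f - a * m * coeff m f := by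
  have hlow : ∑ i ∈ Finset.range m,
      coeff i f * (-a) ^ (m + 1 - i) * (m.choose (m + 1 - i) : ℂ) = 0 := by
    refine Finset.sum_eq_zero fun i hi => ?_
    rcases Nat.eq_zero_or_pos i with rfl | hi0
    · simp
    · rw [hf i hi0 (Finset.mem_range.mp hi), zero_mul, zero_mul]
  simp only [shiftPS, coeff_mk, Nat.add_sub_cancel]
  rw [Finset.sum_range_succ, Finset.sum_range_succ, hlow, Nat.sub_self, Nat.add_sub_cancel_left]
  simp only [pow_one, Nat.choose_one_right, pow_zero, Nat.choose_zero_right]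
  push_cast
  ring

theorem eq_C_of_shiftPS_eq_self {a : ℂ} (ha : a ≠ 0) {f : ℂ⟦X⟧} (hf : shiftPS a f = f) :
    f = C (constantCoeff f) := by
  suffices h : ∀ m, 1 ≤ m → coeff m f = 0 by
    ext (_ | n)
    · simp
    · simp [h (n + 1) (Nat.succ_pos n)]
  intro m
  induction m using Nat.strong_induction_on with
  | _ m ih =>
    intro hm
    have h := coeff_succ_shiftPS a f fun i hi him => ih i him hi
    rw [hf] at h
    have h' : a * m * coeff m f = 0 := by linear_combination h
    simpa [ha, show m ≠ 0 by omega] using h'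

/-- Unitarity: if `g(u) = 1 + ⋯` satisfies `g(u+N) = g(u)(1-u^{-2})`, then
`g(u) g(-u) (1-u^{-2}) = 1`, where `g(-u)` is obtained by `u ↦ -u`,
i.e. by rescaling `X = u⁻¹` by `-1`. -/
theorem unitarity_g (N : ℕ) (hN : 0 < N) (g : PowerSeries ℂ)
    (hg0 : PowerSeries.constantCoeff g = 1)
    (hg : shiftPS (N : ℂ) g = g * (1 - PowerSeries.X ^ 2)) :
    g * (PowerSeries.rescale (-1 : ℂ) g) * (1 - PowerSeries.X ^ 2) = 1 := by
  set G := rescale (-1 : ℂ) g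
  have hG : shiftPS (-N) G = G * (1 - X ^ 2) := by
    simpa [G, rescale_neg_one_shiftPS, rescale_neg_one_X] using congrArg (rescale (-1 : ℂ)) hg
  have hG_shift : shiftPS N (G * (1 - X ^ 2)) = G := by
    rw [← hG, shiftPS_shiftPS, neg_add_cancel, shiftPS_zero]
  have hfix : shiftPS N (g * G * (1 - X ^ 2)) = g * G * (1 - X ^ 2) := by
    rw [mul_assoc, shiftPS_mul, hg, hG_shift]
    ring
  rw [eq_C_of_shiftPS_eq_self (Nat.cast_ne_zero.mpr hN.ne') hfix]
  simp [G, constantCoeff_rescale, hg0]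
end

section
/- The first three coefficients of the unique formal power series g(u) = 1 + g_1 u^{-1} + g_2 u^{-2} + g_3 u^{-3} + \cdots satisfying g(u+N)=g(u)(1-u^{-2}) are g_1 = 1/N, g_2 = (N^2+1)/(2N^2), and g_3 = (N^4 + 4N^2 + 1)/(6N^3). -/
/-!
Comparing the coefficients of `u^{-(n+2)}` on both sides of `g(u+N) = g(u)(1-u^{-2})`, the
coefficient `g_{n+2}` cancels and what remains is a linear equation expressing `g_{n+1}` through
`g_0, …, g_n`, with leading term `-(n+1) N g_{n+1}`. The cases `n = 0, 1, 2` determine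
`g_1, g_2, g_3` in turn from `g_0 = 1`.
-/

open PowerSeries Finset

theorem coeff_shiftPS (a : ℂ) (f : PowerSeries ℂ) (n : ℕ) :
    coeff n (shiftPS a f) =
      ∑ i ∈ range (n + 1), coeff i f * (-a) ^ (n - i) * ((n - 1).choose (n - i) : ℂ) :=
  coeff_mk _ _

theorem coeff_mul_one_sub_X_sq {R : Type*} [CommRing R] (f : PowerSeries R) (n : ℕ) :
    coeff (n + 2) (f * (1 - X ^ 2)) = coeff (n + 2) f - coeff n f := by
  rw [mul_sub, mul_one, map_sub, coeff_mul_X_pow]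

theorem shiftPS_eq_mul_one_sub_X_sq_recurrence {a : ℂ} {g : PowerSeries ℂ}
    (hg : shiftPS a g = g * (1 - X ^ 2)) (n : ℕ) :
    ∑ i ∈ range (n + 2), coeff i g * (-a) ^ (n + 2 - i) * ((n + 1).choose (n + 2 - i) : ℂ)
      + coeff n g = 0 := by
  have h := congrArg (coeff (n + 2)) hg
  rw [coeff_shiftPS, coeff_mul_one_sub_X_sq, sum_range_succ] at h
  simp only [Nat.add_one_sub_one, Nat.sub_self, pow_zero, Nat.choose_zero_right, Nat.cast_one,
    mul_one] at h
  linear_combination h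

/-- The first three coefficients of the unique series `g(u) = 1 + g₁u⁻¹ + g₂u⁻² + ⋯`
satisfying `g(u+N) = g(u)(1-u^{-2})` are `1/N`, `(N²+1)/(2N²)`, `(N⁴+4N²+1)/(6N³)`. -/
theorem first_coefficients_g (N : ℕ) (hN : 0 < N) (g : PowerSeries ℂ)
    (hg0 : PowerSeries.constantCoeff g = 1)
    (hg : shiftPS (N : ℂ) g = g * (1 - PowerSeries.X ^ 2)) :
    PowerSeries.coeff 1 g = 1 / (N : ℂ) ∧
    PowerSeries.coeff 2 g = ((N : ℂ) ^ 2 + 1) / (2 * (N : ℂ) ^ 2) ∧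
    PowerSeries.coeff 3 g = ((N : ℂ) ^ 4 + 4 * (N : ℂ) ^ 2 + 1) / (6 * (N : ℂ) ^ 3) := by
  have hN' : (N : ℂ) ≠ 0 := Nat.cast_ne_zero.mpr hN.ne'
  have hcoeff0 : coeff 0 g = 1 := by rwa [coeff_zero_eq_constantCoeff_apply]
  have h0 := shiftPS_eq_mul_one_sub_X_sq_recurrence hg 0
  have h1 := shiftPS_eq_mul_one_sub_X_sq_recurrence hg 1
  have h2 := shiftPS_eq_mul_one_sub_X_sq_recurrence hg 2
  simp only [sum_range_succ, sum_range_zero, Nat.reduceAdd, Nat.reduceSub, Nat.choose_succ_self,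
    Nat.choose_self, Nat.choose_succ_self_right, Nat.choose_one_right, hcoeff0] at h0 h1 h2
  have e0 : 1 - N * coeff 1 g = 0 := by linear_combination h0
  have e1 : (N ^ 2 + 1) * coeff 1 g - 2 * N * coeff 2 g = 0 := by linear_combination h1
  have e2 : -N ^ 3 * coeff 1 g + (3 * N ^ 2 + 1) * coeff 2 g - 3 * N * coeff 3 g = 0 := by
    linear_combination h2
  have hc1 : coeff 1 g = 1 / (N : ℂ) := by
    field_simp
    linear_combination -e0
  have hc2 : coeff 2 g = ((N : ℂ) ^ 2 + 1) / (2 * (N : ℂ) ^ 2) := by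
    rw [hc1] at e1
    field_simp at e1 ⊢
    linear_combination -e1
  refine ⟨hc1, hc2, ?_⟩
  rw [hc1, hc2] at e2
  field_simp at e2 ⊢
  linear_combination -e2
end

section
/- The center \mathfrak{z}(V) = \{v \in V : w_r v = 0 \text{ for all } w \in V, r \ge 0\} of a quantum vertex algebra V is closed under all s-products: if w, u \in \mathfrak{z}(V) and v \in V, s \in \mathbb{Z}, then w_s u \in \mathfrak{z}(V). -/
noncomputable section

/- A quantum vertex algebra over `ℂ[[h]]` (here `R = PowerSeries ℂ`, `h = X`),
recorded through the coefficients of its structure maps: `Y v w r` stands for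
the `r`-th product `v_r w`, so that `Y(v,z)w = ∑_r (v_r w) z^{-r-1}`. -/
structure QuantumVertexAlgebra (V : Type*) [AddCommGroup V]
    [Module (PowerSeries ℂ) V] where
  /-- the products `v_r w` -/
  Y : V → V → ℤ → V
  Y_add_left : ∀ v v' w r, Y (v + v') w r = Y v w r + Y v' w r
  Y_add_right : ∀ v w w' r, Y v (w + w') r = Y v w r + Y v w' r
  Y_smul_left : ∀ (c : PowerSeries ℂ) v w r, Y (c • v) w r = c • Y v w r
  Y_smul_right : ∀ (c : PowerSeries ℂ) v w r, Y v (c • w) r = c • Y v w r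
  /-- `Y(v,z)w ∈ V_h((z))`: h-adic truncation -/
  trunc : ∀ v w (n : ℕ), ∃ s : ℤ, ∀ r : ℤ, s ≤ r →
    ∃ y : V, Y v w r = (PowerSeries.X ^ n : PowerSeries ℂ) • y
  /-- the vacuum vector -/
  vac : V
  /-- `Y(𝟙,z)v = v` -/
  vac_left : ∀ v (r : ℤ), Y vac v r = if r = -1 then v else 0
  /-- `Y(v,z)𝟙` is a Taylor series in `z` -/
  vac_right_pos : ∀ v (r : ℤ), 0 ≤ r → Y v vac r = 0
  /-- `Y(v,z)𝟙|_{z=0} = v` -/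
  vac_create : ∀ v, Y v vac (-1) = v
  /-- the translation operator -/
  D : V → V
  D_add : ∀ v w, D (v + w) = D v + D w
  D_smul : ∀ (c : PowerSeries ℂ) v, D (c • v) = c • D v
  /-- `D 𝟙 = 0` -/
  D_vac : D vac = 0
  /-- `(d/dz) Y(v,z) = [D, Y(v,z)]` in components -/
  D_bracket : ∀ v w (r : ℤ), D (Y v w r) - Y v (D w) r = (-r : ℤ) • Y v w (r - 1)
  /-- `V` is h-adically separated (topologically free) -/
  sep : ∀ x : V, (∀ n : ℕ, ∃ y : V, x = (PowerSeries.X ^ n : PowerSeries ℂ) • y) → x = 0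

variable {V : Type*} [AddCommGroup V] [Module (PowerSeries ℂ) V]

/-- The center `𝔷(V) = {v : w_r v = 0 for all w ∈ V, r ≥ 0}`. -/
def QuantumVertexAlgebra.center (Q : QuantumVertexAlgebra V) : Set V :=
  {v | ∀ w : V, ∀ r : ℤ, 0 ≤ r → Q.Y w v r = 0}

/-- Generalized binomial coefficient `C(z, k)` for `z : ℤ`. -/
def zchoose (z : ℤ) (k : ℕ) : ℤ :=
  if 0 ≤ z then (z.toNat.choose k : ℤ) else (-1) ^ k * (((-z).toNat + k - 1).choose k : ℤ)

/-- Coefficient of `z₀^a z₂^b` in `Y(v, z₀+z₂) Y(w, z₂) u`, where `(z₀+z₂)^{-r-1}`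
is expanded in nonnegative powers of `z₂`.  When `u` lies in the center, the
relevant sum is finite and equals the sum below over the window
`-a-b-1 ≤ r ≤ -a-1`. -/
def lhsCoeff (Q : QuantumVertexAlgebra V) (v w u : V) (a b : ℤ) : V :=
  ∑ r ∈ Finset.Icc (-a - b - 1) (-a - 1),
    zchoose (-r - 1) (-a - r - 1).toNat • Q.Y v (Q.Y w u (-a - r - 2 - b)) r

/-- Coefficient of `z₀^a z₂^b` in `Y(Y(v,z₀)w, z₂) u`. -/
def rhsCoeff (Q : QuantumVertexAlgebra V) (v w u : V) (a b : ℤ) : V :=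
  Q.Y (Q.Y v w (-a - 1)) u (-b - 1)

/- `w_s u = 0` for `s ≥ 0` since `u` is central, so only `s = -b-1` with `b ≥ 0`
matters; induct on `b`. For `r ≥ 0`, the coefficient of `z₀^{-r-1} z₂^b` in strong
associativity has right side `(x_r w)_{-b-1} u = 0`, while its left side is
`∑_{ρ} C(-ρ-1, r-ρ) x_ρ (w_{-(b-r+ρ)-1} u)`: the terms with `ρ < 0` have vanishing binomial
coefficient, those with `0 ≤ ρ < r` vanish by induction, and the term `ρ = r` is
`x_r (w_{-b-1} u)`. -/

namespace QuantumVertexAlgebra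

variable (Q : QuantumVertexAlgebra V)

lemma Y_zero_left (w : V) (r : ℤ) : Q.Y 0 w r = 0 := by
  simpa using Q.Y_smul_left 0 0 w r

lemma Y_zero_right (v : V) (r : ℤ) : Q.Y v 0 r = 0 := by
  simpa using Q.Y_smul_right 0 v 0 r

end QuantumVertexAlgebra

lemma zchoose_zero_right (z : ℤ) : zchoose z 0 = 1 := by
  unfold zchoose
  split <;> simp

lemma zchoose_eq_zero_of_lt {z : ℤ} {k : ℕ} (h0 : 0 ≤ z) (h1 : z < k) : zchoose z k = 0 := by
  rw [zchoose, if_pos h0, Nat.choose_eq_zero_of_lt (by omega), Nat.cast_zero]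

lemma rhsCoeff_eq_zero_of_neg (Q : QuantumVertexAlgebra V) (v : V) {w : V} (hw : w ∈ Q.center)
    (u : V) {a : ℤ} (ha : a < 0) (b : ℤ) : rhsCoeff Q v w u a b = 0 := by
  rw [rhsCoeff, hw v (-a - 1) (by omega), Q.Y_zero_left]

lemma lhsCoeff_eq_top_term (Q : QuantumVertexAlgebra V) (x w u : V) {r : ℤ} {b : ℕ}
    (hr : 0 ≤ r)
    (hvanish : ∀ ρ : ℤ, 0 ≤ ρ → ρ < r → r - b ≤ ρ → Q.Y x (Q.Y w u (r - ρ - b - 1)) ρ = 0) :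
    lhsCoeff Q x w u (-r - 1) b = Q.Y x (Q.Y w u (-b - 1)) r := by
  rw [lhsCoeff, Finset.sum_eq_single_of_mem r (by rw [Finset.mem_Icc]; omega)]
  · rw [show (-(-r - 1) - r - 1).toNat = 0 by omega, zchoose_zero_right, one_smul]
    congr 2
    ring
  · intro ρ hρ hne
    rw [Finset.mem_Icc] at hρ
    rcases lt_or_ge ρ 0 with hneg | hpos
    · rw [zchoose_eq_zero_of_lt (by omega) (by omega), zero_smul]
    · rw [show -(-r - 1) - ρ - 2 - (b : ℤ) = r - ρ - b - 1 by ring,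
        hvanish ρ hpos (by omega) (by omega), smul_zero]

lemma Y_neg_sub_one_mem_center (Q : QuantumVertexAlgebra V) {w u : V} (hw : w ∈ Q.center)
    (hSA : ∀ (v : V) (a b : ℤ), lhsCoeff Q v w u a b = rhsCoeff Q v w u a b) (b : ℕ) :
    Q.Y w u (-b - 1) ∈ Q.center := by
  induction b using Nat.strong_induction_on with
  | _ b ih =>
    intro x r hr
    have hvanish : ∀ ρ : ℤ, 0 ≤ ρ → ρ < r → r - b ≤ ρ →
        Q.Y x (Q.Y w u (r - ρ - b - 1)) ρ = 0 := by
      intro ρ hρ hρr hρb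
      obtain ⟨k, hk⟩ : ∃ k : ℕ, (k : ℤ) = b - r + ρ := ⟨(b - r + ρ).toNat, by omega⟩
      rw [show r - ρ - b - 1 = -(k : ℤ) - 1 by omega]
      exact ih k (by omega) x ρ hρ
    rw [← lhsCoeff_eq_top_term Q x w u hr hvanish, hSA x,
      rhsCoeff_eq_zero_of_neg Q x hw u (by omega)]

/-- The center of a quantum vertex algebra is closed under all `s`-products:
if `w, u ∈ 𝔷(V)` and `s ∈ ℤ` then `w_s u ∈ 𝔷(V)`.  (One may use the strong
associativity `Y(v,z₀+z₂)Y(w,z₂)u = Y(Y(v,z₀)w,z₂)u`, valid for `w, u ∈ 𝔷(V)`;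
it is supplied here coefficientwise as the hypothesis `hSA`.) -/
theorem center_closed_under_products (Q : QuantumVertexAlgebra V)
    (hSA : ∀ v w u : V, w ∈ Q.center → u ∈ Q.center →
      ∀ a b : ℤ, lhsCoeff Q v w u a b = rhsCoeff Q v w u a b) :
    ∀ w u : V, w ∈ Q.center → u ∈ Q.center → ∀ s : ℤ, Q.Y w u s ∈ Q.center := by
  intro w u hw hu s
  rcases le_or_gt 0 s with hs | hs
  · intro x r _
    rw [hu w s hs, Q.Y_zero_right]
  · obtain ⟨b, rfl⟩ : ∃ b : ℕ, s = -(b : ℤ) - 1 := ⟨(-s - 1).toNat, by omega⟩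
    exact Y_neg_sub_one_mem_center Q hw (hSA · w u hw hu) b

end
end

section
/- For elements v \in V and w, u in the center \mathfrak{z}(V) of a quantum vertex algebra V, weak associativity upgrades to strong associativity: Y(v, z_0+z_2) Y(w,z_2) u = Y(Y(v,z_0)w, z_2) u as an identity of formal series. -/
/-!
Write `d(a, b)` for the coefficient of `z₀^a z₂^b` in the difference of the two sides. Since `u`
is central, both sides vanish for `b < 0`, so `d` lies in a space where multiplication by
`(z₀ + z₂)^ℓ` is injective modulo any subgroup: the coefficient of `z₀^{a+ℓ} z₂^b` of the product
is `d(a, b)` plus terms `d(a', b')` with `b' < b`, and induction on `b` shows that all `d(a, b)`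
lie in `h^n V` once the product does. By weak associativity this holds for every `n`, and
`V` is `h`-adically separated.
-/

noncomputable section

variable {V : Type*} [AddCommGroup V] [Module (PowerSeries ℂ) V]

section

variable {M : Type*} [AddCommGroup M]

/-- The coefficient of `z₀^a z₂^b` in `(z₀ + z₂)^ℓ f`, where `f = ∑ d a b z₀^a z₂^b`. -/
def addPowMulCoeff (ℓ : ℕ) (d : ℤ → ℤ → M) (a b : ℤ) : M :=
  ∑ j ∈ Finset.range (ℓ + 1), (ℓ.choose j : ℤ) • d (a - j) (b - ((ℓ : ℤ) - j))

lemma addPowMulCoeff_add_left (ℓ : ℕ) (d : ℤ → ℤ → M) (a b : ℤ) :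
    addPowMulCoeff ℓ d (a + ℓ) b =
      d a b + ∑ j ∈ Finset.range ℓ, (ℓ.choose j : ℤ) • d (a + ℓ - j) (b - ((ℓ : ℤ) - j)) := by
  rw [addPowMulCoeff, Finset.sum_range_succ, Nat.choose_self, add_sub_cancel_right, sub_self,
    sub_zero, Nat.cast_one, one_smul, add_comm]

lemma mem_of_addPowMulCoeff_mem {N : AddSubgroup M} {d : ℤ → ℤ → M} {ℓ : ℕ}
    (hd : ∀ a b, b < 0 → d a b = 0) (hN : ∀ a b, addPowMulCoeff ℓ d a b ∈ N) (a b : ℤ) :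
    d a b ∈ N := by
  suffices h : ∀ m : ℕ, ∀ a b : ℤ, b < m → d a b ∈ N from h (b.toNat + 1) a b (by omega)
  intro m
  induction m with
  | zero => exact fun a b hb => hd a b (mod_cast hb) ▸ N.zero_mem
  | succ m ih =>
    intro a b hb
    have hlower : ∀ j ∈ Finset.range ℓ,
        (ℓ.choose j : ℤ) • d (a + ℓ - j) (b - ((ℓ : ℤ) - j)) ∈ N := fun j hj =>
      N.zsmul_mem (ih _ _ (by have := Finset.mem_range.1 hj; push_cast at hb; omega)) _
    have h := hN (a + ℓ) b
    rw [addPowMulCoeff_add_left] at h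
    simpa using N.sub_mem h (N.sum_mem hlower)

end

lemma lhsCoeff_of_neg (Q : QuantumVertexAlgebra V) (v w u : V) (a : ℤ) {b : ℤ} (hb : b < 0) :
    lhsCoeff Q v w u a b = 0 := by
  rw [lhsCoeff, Finset.Icc_eq_empty (by omega), Finset.sum_empty]

lemma rhsCoeff_of_neg {Q : QuantumVertexAlgebra V} {u : V} (hu : u ∈ Q.center) (v w : V) (a : ℤ)
    {b : ℤ} (hb : b < 0) : rhsCoeff Q v w u a b = 0 :=
  hu _ _ (by omega)

theorem weak_to_strong_associativity_general (Q : QuantumVertexAlgebra V)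
    (v w u : V) (hu : u ∈ Q.center)
    (hWA : ∀ n : ℕ, ∃ ℓ : ℕ, ∀ a b : ℤ, ∃ y : V,
      (∑ j ∈ Finset.range (ℓ + 1), (ℓ.choose j : ℤ) •
        (lhsCoeff Q v w u (a - j) (b - ((ℓ : ℤ) - j)) -
          rhsCoeff Q v w u (a - j) (b - ((ℓ : ℤ) - j)))) =
        (PowerSeries.X ^ n : PowerSeries ℂ) • y) :
    ∀ a b : ℤ, lhsCoeff Q v w u a b = rhsCoeff Q v w u a b := by
  intro a b
  rw [← sub_eq_zero]
  refine Q.sep _ fun n => ?_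
  obtain ⟨ℓ, hℓ⟩ := hWA n
  let mulXPow := DistribSMul.toAddMonoidHom V (PowerSeries.X ^ n : PowerSeries ℂ)
  obtain ⟨y, hy⟩ := mem_of_addPowMulCoeff_mem (N := mulXPow.range) (ℓ := ℓ)
    (d := fun a b => lhsCoeff Q v w u a b - rhsCoeff Q v w u a b)
    (fun a b hb => by rw [lhsCoeff_of_neg Q v w u a hb, rhsCoeff_of_neg hu v w a hb, sub_zero])
    (fun a b => by obtain ⟨y, hy⟩ := hℓ a b; exact ⟨y, hy.symm⟩) a b
  exact ⟨y, hy.symm⟩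

/-- For `v ∈ V` and `w, u` in the center of a quantum vertex algebra, weak
associativity upgrades to strong associativity
`Y(v,z₀+z₂)Y(w,z₂)u = Y(Y(v,z₀)w,z₂)u`, stated coefficientwise.  The hypothesis
`hWA` is weak associativity: for every `n` there is `ℓ ≥ 0` such that all
coefficients of `(z₀+z₂)^ℓ (Y(v,z₀+z₂)Y(w,z₂)u - Y(Y(v,z₀)w,z₂)u)` lie in
`h^n V`. -/
theorem weak_to_strong_associativity (Q : QuantumVertexAlgebra V)
    (v w u : V) (hw : w ∈ Q.center) (hu : u ∈ Q.center)
    (hWA : ∀ n : ℕ, ∃ ℓ : ℕ, ∀ a b : ℤ, ∃ y : V,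
      (∑ j ∈ Finset.range (ℓ + 1), (ℓ.choose j : ℤ) •
        (lhsCoeff Q v w u (a - j) (b - ((ℓ : ℤ) - j)) -
          rhsCoeff Q v w u (a - j) (b - ((ℓ : ℤ) - j)))) =
        (PowerSeries.X ^ n : PowerSeries ℂ) • y) :
    ∀ a b : ℤ, lhsCoeff Q v w u a b = rhsCoeff Q v w u a b :=
  weak_to_strong_associativity_general Q v w u hu hWA

end
end

section
/- Let A^{(m)} denote the image in (\operatorname{End}\mathbb{C}^N)^{\otimes m} of the antisymmetrizer a^{(m)} = \frac{1}{m!}\sum_{s \in S_m} \operatorname{sgn}(s)\, s under the permutation action of S_m on (\mathbb{C}^N)^{\otimes m}. Then A^{(N)} R_{0N}(v+N-1) R_{0\,N-1}(v+N-2) \cdots R_{01}(v) = A^{(N)} (1 - v^{-1}), where R_{0a}(u) = 1 - P_{0a} u^{-1} acts on an auxiliary copy 0 of \mathbb{C}^N and the a-th factor. -/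
noncomputable section
open scoped Classical

/- Operators on `(ℂ^N)^{⊗(N+1)}`, with factors labelled `0, 1, …, N`, are
modelled as matrices indexed by `Fin N × (Fin N → Fin N)`: the first component
is the auxiliary factor `0`, the second records factors `1, …, N`. -/
abbrev IdxA (N : ℕ) := Fin N × (Fin N → Fin N)

/-- The permutation operator `P_{0a}` exchanging factor `0` and factor `a`. -/
def P0 (N : ℕ) (a : Fin N) : Matrix (IdxA N) (IdxA N) ℂ := fun p q =>
  if p.1 = q.2 a ∧ q.1 = p.2 a ∧ (∀ b : Fin N, b ≠ a → p.2 b = q.2 b) then 1 else 0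

/-- The Yang R-matrix `R_{0a}(u) = 1 - P_{0a} u⁻¹`. -/
def R0 (N : ℕ) (a : Fin N) (u : ℂ) : Matrix (IdxA N) (IdxA N) ℂ :=
  1 - u⁻¹ • P0 N a

/-- The operator on factors `1, …, N` induced by a permutation `σ ∈ S_N`. -/
def Pperm (N : ℕ) (σ : Equiv.Perm (Fin N)) : Matrix (IdxA N) (IdxA N) ℂ := fun p q =>
  if p.1 = q.1 ∧ (∀ b : Fin N, p.2 b = q.2 (σ b)) then 1 else 0

/-- The antisymmetrizer `A^{(N)} = (1/N!) ∑_{s ∈ S_N} sgn(s) s` acting on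
factors `1, …, N` (identity on factor `0`). -/
def AsymN (N : ℕ) : Matrix (IdxA N) (IdxA N) ℂ :=
  (N.factorial : ℂ)⁻¹ •
    ∑ σ : Equiv.Perm (Fin N), ((Equiv.Perm.sign σ : ℤ) : ℂ) • Pperm N σ


/-!
The antisymmetrizer absorbs permutations with their sign, and
`P_{0a} P_{0b} = P_{ab} P_{0a}`, so `A P_{0a} P_{0b} = -A P_{0a}` for `a ≠ b`. Multiplying out the
product from the right, `A R_{0N}(v+N-1) ⋯ R_{01}(v)` therefore telescopes to
`A - v⁻¹ ∑_a A P_{0a}`, the coefficients combining through `(w + 1)⁻¹ (1 + w⁻¹) = w⁻¹`.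
Finally `∑_a A P_{0a} = A`: in coordinates `A` has entries `δ · det E_f · det E_g / N!`, where
`E_f` is the `0/1` matrix with rows `e_{f i}`, and the identity becomes the expansion
`adjugate E · E = det E • 1`.
-/

theorem mul_prod_ofFn_one_sub_smul {K R : Type*} [Field K] [Ring R] [Algebra K R] {n : ℕ}
    (A : R) (P : Fin n → R) (hP : ∀ i j, i ≠ j → A * P i * P j = -(A * P i))
    (w : K) (hw : ∀ i : Fin n, w + (i : ℕ) ≠ 0) :
    A * (List.ofFn fun i => 1 - (w + (i : ℕ))⁻¹ • P i).reverse.prod =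
      A - w⁻¹ • ∑ i, A * P i := by
  induction n generalizing w with
  | zero => simp
  | succ n ih =>
    have hw' : ∀ i : Fin n, w + 1 + (i : ℕ) ≠ 0 := fun i => by
      simpa [add_assoc, add_comm (1 : K)] using hw i.succ
    have hS : (∑ i : Fin n, A * P i.succ) * P 0 = -∑ i : Fin n, A * P i.succ := by
      rw [Finset.sum_mul, ← Finset.sum_neg_distrib]
      exact Finset.sum_congr rfl fun i _ => hP _ _ (Fin.succ_ne_zero i)
    -- `w + 1` may vanish, but only when the tail sum is empty
    have hcoeff : (w + 1)⁻¹ * (1 + w⁻¹) = w⁻¹ ∨ ∑ i : Fin n, A * P i.succ = 0 := by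
      rcases n with _ | n
      · simp
      · left
        have h0 : w ≠ 0 := by simpa using hw 0
        have h1 : w + 1 ≠ 0 := by simpa using hw 1
        field_simp
    simp only [List.ofFn_succ, List.reverse_cons, List.prod_append, List.prod_singleton,
      Fin.sum_univ_succ, Fin.val_zero, Nat.cast_zero, add_zero, Fin.val_succ, Nat.cast_succ]
    have htail := ih (fun i => P i.succ)
      (fun i j hij => hP _ _ ((Fin.succ_injective _).ne hij)) (w + 1) hw'
    simp only [add_assoc, add_comm (1 : K)] at htail
    rw [← mul_assoc, htail]
    set S := ∑ i : Fin n, A * P i.succ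
    have hexpand : (A - (w + 1)⁻¹ • S) * (1 - w⁻¹ • P 0) =
        A - w⁻¹ • (A * P 0) - ((w + 1)⁻¹ * (1 + w⁻¹)) • S := by
      simp only [sub_mul, mul_sub, mul_one, mul_smul_comm, smul_mul_assoc, hS]
      module
    rw [hexpand, smul_add]
    rcases hcoeff with h | h
    · rw [h]; abel
    · simp [h]

namespace Matrix

variable {n R : Type*} [DecidableEq n]

variable (R) in
/-- `det (basisRows R f)` is the sign of `f` when `f` is a bijection and `0` otherwise. -/
def basisRows [Zero R] [One R] (f : n → n) : Matrix n n R :=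
  of fun i => Pi.single (f i) 1

theorem basisRows_update [Zero R] [One R] (f : n → n) (i j : n) :
    basisRows R (Function.update f i j) = (basisRows R f).updateRow i (Pi.single j 1) := by
  ext k c
  rcases eq_or_ne k i with rfl | hk <;> simp [basisRows, updateRow_apply, *]

variable [Fintype n] [CommRing R]

theorem det_basisRows_comp_perm (f : n → n) (σ : Equiv.Perm n) :
    (basisRows R (f ∘ σ)).det = Equiv.Perm.sign σ * (basisRows R f).det :=
  det_permute σ (basisRows R f)

theorem sum_det_basisRows_update (f : n → n) (i j : n) :
    ∑ m, (basisRows R (Function.update f m j)).det * (if i = f m then 1 else 0) =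
      (basisRows R f).det * if i = j then 1 else 0 := by
  have h := congrFun (congrFun (adjugate_mul (basisRows R f)) j) i
  simp only [mul_apply, adjugate_apply, smul_apply, one_apply, smul_eq_mul, eq_comm (a := j)] at h
  simp only [basisRows_update]
  simpa [basisRows, Pi.single_apply] using h

theorem det_basisRows_mul_det_basisRows (f g : n → n) :
    (basisRows R f).det * (basisRows R g).det =
      ∑ σ : Equiv.Perm n, (Equiv.Perm.sign σ : R) * if ∀ b, f b = g (σ b) then 1 else 0 := by
  rw [mul_comm, ← det_transpose (basisRows R f), ← det_mul, det_apply]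
  refine Finset.sum_congr rfl fun σ _ => ?_
  simp [basisRows, mul_apply, transpose_apply, Pi.single_apply, Finset.prod_boole, Units.smul_def]

end Matrix

open Matrix

namespace IdxA

variable {N : ℕ}

def swapAux (a : Fin N) : Equiv.Perm (IdxA N) :=
  Function.Involutive.toPerm (fun p => (p.2 a, Function.update p.2 a p.1)) fun p => by
    simp [Function.update_idem]

def permSlots (σ : Equiv.Perm (Fin N)) : Equiv.Perm (IdxA N) :=
  (Equiv.refl _).prodCongr (σ.arrowCongr (Equiv.refl _))

@[simp] theorem swapAux_apply (a : Fin N) (p : IdxA N) :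
    swapAux a p = (p.2 a, Function.update p.2 a p.1) := rfl

@[simp] theorem swapAux_symm (a : Fin N) : (swapAux a).symm = swapAux a := rfl

@[simp] theorem permSlots_apply (σ : Equiv.Perm (Fin N)) (p : IdxA N) :
    permSlots σ p = (p.1, p.2 ∘ σ.symm) := rfl

@[simp] theorem permSlots_symm_apply (σ : Equiv.Perm (Fin N)) (p : IdxA N) :
    (permSlots σ).symm p = (p.1, p.2 ∘ σ) := rfl

theorem swapAux_mul_swapAux {a b : Fin N} (hab : a ≠ b) :
    swapAux b * swapAux a = swapAux a * permSlots (Equiv.swap a b) := by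
  ext p c
  · simp [hab.symm]
  · simp [Function.update_apply, Equiv.swap_apply_def]
    split_ifs <;> simp_all

end IdxA

section

variable {N : ℕ}

open IdxA

theorem P0_eq_permMatrix (a : Fin N) : P0 N a = (swapAux a).permMatrix ℂ := by
  ext p q
  simp only [P0, Equiv.Perm.permMatrix, PEquiv.toMatrix_apply, Equiv.toPEquiv_apply,
    Option.mem_def, Option.some.injEq, swapAux_apply, Prod.ext_iff, Function.update_eq_iff,
    eq_comm (a := q.1), and_left_comm]

theorem Pperm_eq_permMatrix (σ : Equiv.Perm (Fin N)) :
    Pperm N σ = (permSlots σ).permMatrix ℂ := by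
  ext p q
  simp [Pperm, Prod.ext_iff, funext_iff,
    ← σ.forall_congr_right (q := fun x => p.2 (σ.symm x) = q.2 x)]

theorem AsymN_apply (p q : IdxA N) :
    AsymN N p q = (N.factorial : ℂ)⁻¹ *
      ((if p.1 = q.1 then 1 else 0) * ((basisRows ℂ p.2).det * (basisRows ℂ q.2).det)) := by
  by_cases h : p.1 = q.1 <;>
    simp [AsymN, Matrix.sum_apply, Pperm, det_basisRows_mul_det_basisRows, Finset.mul_sum, h]

theorem AsymN_mul_Pperm (σ : Equiv.Perm (Fin N)) :
    AsymN N * Pperm N σ = ((Equiv.Perm.sign σ : ℤ) : ℂ) • AsymN N := by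
  ext p q
  rw [Pperm_eq_permMatrix, Equiv.Perm.permMatrix, PEquiv.mul_toMatrix_toPEquiv]
  simp only [submatrix_apply, id, permSlots_symm_apply, AsymN_apply, det_basisRows_comp_perm,
    Matrix.smul_apply, smul_eq_mul]
  ring

theorem AsymN_mul_P0_mul_P0 {a b : Fin N} (hab : a ≠ b) :
    AsymN N * P0 N a * P0 N b = -(AsymN N * P0 N a) := by
  rw [mul_assoc, P0_eq_permMatrix, P0_eq_permMatrix, ← permMatrix_mul, swapAux_mul_swapAux hab,
    permMatrix_mul, ← Pperm_eq_permMatrix, ← P0_eq_permMatrix, ← mul_assoc, AsymN_mul_Pperm,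
    Equiv.Perm.sign_swap hab]
  simp

theorem sum_AsymN_mul_P0 : ∑ a, AsymN N * P0 N a = AsymN N := by
  ext p q
  simp only [Matrix.sum_apply, P0_eq_permMatrix, Equiv.Perm.permMatrix,
    PEquiv.mul_toMatrix_toPEquiv, submatrix_apply, id, swapAux_symm, swapAux_apply, AsymN_apply]
  calc _ = (N.factorial : ℂ)⁻¹ * (basisRows ℂ p.2).det *
          ∑ m, (basisRows ℂ (Function.update q.2 m q.1)).det *
            (if p.1 = q.2 m then 1 else 0) := by
        rw [Finset.mul_sum]
        exact Finset.sum_congr rfl fun m _ => by ring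
    _ = _ := by rw [sum_det_basisRows_update]; ring

end

/-- The paper's factor `R_{0,a+1}(v+a)` is indexed here by `a : Fin N`; the product runs with `a`
decreasing from left to right. -/
theorem antisymmetrizer_fusion_row_general (N : ℕ) (v : ℂ)
    (hv : ∀ a : Fin N, v + (a : ℕ) ≠ 0) :
    AsymN N * ((List.ofFn fun a : Fin N => R0 N a (v + (a : ℕ))).reverse.prod) =
      (1 - v⁻¹) • AsymN N := by
  have htelescope := mul_prod_ofFn_one_sub_smul (AsymN N) (P0 N)
    (fun _ _ hab => AsymN_mul_P0_mul_P0 hab) v hv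
  simp only [R0]
  rw [htelescope, sum_AsymN_mul_P0, sub_smul, one_smul]

/-- `A^{(N)} R_{0N}(v+N-1) R_{0,N-1}(v+N-2) ⋯ R_{01}(v) = A^{(N)} (1 - v⁻¹)`:
here the factor `R_{0a}(v+a-1)` corresponds to `a : Fin N` with shift `v + a`,
and the product is taken with `a` decreasing from left to right. -/
theorem antisymmetrizer_fusion_row (N : ℕ) (hN : 0 < N) (v : ℂ)
    (hv : ∀ a : Fin N, v + (a : ℕ) ≠ 0) :
    AsymN N * ((List.ofFn fun a : Fin N => R0 N a (v + (a : ℕ))).reverse.prod) =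
      (1 - v⁻¹) • AsymN N :=
  antisymmetrizer_fusion_row_general N v hv

end
end

section
/- For the antisymmetrizer A^{(m)} = \frac{1}{m!}\sum_{s \in S_m} \operatorname{sgn}(s)\, s, viewed in the group algebra \mathbb{C}[S_m] (acting on (\mathbb{C}^N)^{\otimes m}) with P_{ab} the transposition (a\,b), one has the fusion identity A^{(m)} = \frac{1}{h(1^m)} \prod_{1 \le a < b \le m} R_{ab}(c_a - c_b), where c_a = -(a-1) are the contents of the column tableau, R_{ab}(u) = 1 - P_{ab}u^{-1}, the product is taken in lexicographic order on pairs (a,b), and h(1^m) = m! is the product of hook lengths; that is, \prod_{1\le a<b\le m,\ \text{lex order}} \big(1 - \frac{P_{ab}}{b-a}\big) = m!\, A^{(m)}. -/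
noncomputable section

open MonoidAlgebra

/-- The list of pairs `(a,b)` with `a < b` in `Fin m`, in lexicographic order. -/
def lexPairs (m : ℕ) : List (Fin m × Fin m) :=
  ((List.finRange m) ×ˢ (List.finRange m)).filter fun p => decide (p.1 < p.2)

/-- The antisymmetrizer `a^{(m)} = (1/m!) ∑_{s ∈ S_m} sgn(s) s` in `ℂ[S_m]`. -/
def antisym (m : ℕ) : MonoidAlgebra ℂ (Equiv.Perm (Fin m)) :=
  (m.factorial : ℂ)⁻¹ •
    ∑ σ : Equiv.Perm (Fin m),
      ((Equiv.Perm.sign σ : ℤ) : ℂ) • MonoidAlgebra.of ℂ (Equiv.Perm (Fin m)) σ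

namespace CF


abbrev Alg (m : ℕ) := MonoidAlgebra ℂ (Equiv.Perm (Fin m))

def Alt (m : ℕ) : Alg m :=
  ∑ σ : Equiv.Perm (Fin m), ((Equiv.Perm.sign σ : ℤ) : ℂ) • MonoidAlgebra.of ℂ _ σ

def emb (m : ℕ) : Equiv.Perm (Fin m) →* Equiv.Perm (Fin (m+1)) where
  toFun σ := Equiv.Perm.decomposeFin.symm (0, σ)
  map_one' := (Equiv.Perm.decomposeFin_symm_of_one 0).trans (Equiv.swap_self 0)
  map_mul' σ τ := by
    ext x
    refine Fin.cases ?_ ?_ x <;>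
      simp [Equiv.Perm.decomposeFin_symm_apply_zero, Equiv.Perm.decomposeFin_symm_apply_succ]

@[simp] lemma emb_apply_zero (σ : Equiv.Perm (Fin m)) : emb m σ 0 = 0 := by
  rw [show (emb m σ : Equiv.Perm (Fin (m+1))) = Equiv.Perm.decomposeFin.symm (0, σ) from rfl,
    Equiv.Perm.decomposeFin_symm_apply_zero]

@[simp] lemma emb_apply_succ (σ : Equiv.Perm (Fin m)) (x : Fin m) :
    emb m σ x.succ = (σ x).succ := by
  rw [show (emb m σ : Equiv.Perm (Fin (m+1))) = Equiv.Perm.decomposeFin.symm (0, σ) from rfl,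
    Equiv.Perm.decomposeFin_symm_apply_succ]
  simp

lemma emb_swap (a b : Fin m) : emb m (Equiv.swap a b) = Equiv.swap a.succ b.succ := by
  ext x
  refine Fin.cases ?_ ?_ x
  · simp [Equiv.swap_apply_of_ne_of_ne (Fin.succ_ne_zero a).symm (Fin.succ_ne_zero b).symm]
  · intro y
    simp only [emb_apply_succ, Equiv.swap_apply_def, Fin.succ_inj]
    split_ifs <;> rfl

@[simp] lemma sign_emb (σ : Equiv.Perm (Fin m)) :
    Equiv.Perm.sign (emb m σ) = Equiv.Perm.sign σ := by
  rw [show (emb m σ : Equiv.Perm (Fin (m+1))) = Equiv.Perm.decomposeFin.symm (0, σ) from rfl,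
    Equiv.Perm.decomposeFin.symm_sign]
  simp

def ι (m : ℕ) : Alg m →ₐ[ℂ] Alg (m+1) := MonoidAlgebra.mapDomainAlgHom ℂ ℂ (emb m)

@[simp] lemma ι_of (σ : Equiv.Perm (Fin m)) :
    ι m (MonoidAlgebra.of ℂ _ σ) = MonoidAlgebra.of ℂ _ (emb m σ) := by
  simp [ι, MonoidAlgebra.of_apply, MonoidAlgebra.mapDomainAlgHom, Finsupp.mapDomain_single]

lemma absorb (τ : Equiv.Perm (Fin m)) :
    MonoidAlgebra.of ℂ _ τ * Alt m = ((Equiv.Perm.sign τ : ℤ) : ℂ) • Alt m := by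
  rw [Alt, Finset.mul_sum, Finset.smul_sum]
  refine Fintype.sum_equiv (Equiv.mulLeft τ) _ _ fun σ => ?_
  simp only [Equiv.coe_mulLeft, mul_smul_comm, ← map_mul, smul_smul]
  congr 1
  rcases Int.units_eq_one_or (Equiv.Perm.sign τ) with h | h <;>
    rcases Int.units_eq_one_or (Equiv.Perm.sign σ) with h' | h' <;>
      simp [map_mul, h, h']


lemma iota_Alt (m : ℕ) : ι m (Alt m) =
    ∑ σ : Equiv.Perm (Fin m), ((Equiv.Perm.sign σ : ℤ) : ℂ) • MonoidAlgebra.of ℂ _ (emb m σ) := by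
  rw [Alt, map_sum]
  simp [ι, MonoidAlgebra.of_apply, MonoidAlgebra.mapDomainAlgHom, Finsupp.mapDomain_single]

lemma absorb' (τ : Equiv.Perm (Fin m)) :
    MonoidAlgebra.of ℂ _ (emb m τ) * ι m (Alt m)
      = ((Equiv.Perm.sign τ : ℤ) : ℂ) • ι m (Alt m) := by
  rw [← ι_of, ← map_mul, absorb, map_smul]

open Fin.NatCast in
def w (m b : ℕ) : Equiv.Perm (Fin (m+1)) := Equiv.swap 0 ((b+1 : ℕ) : Fin (m+1))

open Fin.NatCast in
lemma wval {m b : ℕ} (hb : b < m) : ((b+1 : ℕ) : Fin (m+1)) = Fin.succ ⟨b, hb⟩ := by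
  ext
  rw [Fin.val_cast_of_lt (by omega)]
  simp

lemma w_eq {m b : ℕ} (hb : b < m) : w m b = Equiv.swap 0 (Fin.succ ⟨b, hb⟩) := by
  rw [w, wval hb]

lemma swap_succ_comm {m : ℕ} {k d : Fin m} (hkd : k ≠ d) :
    Equiv.swap (0 : Fin (m+1)) k.succ * Equiv.swap 0 d.succ
      = Equiv.swap 0 d.succ * Equiv.swap k.succ d.succ := by
  have h := Equiv.swap_mul_swap_mul_swap (x := k.succ) (y := (0 : Fin (m+1))) (z := d.succ)
    (Fin.succ_ne_zero k) (fun h => hkd (Fin.succ_injective _ h))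
  rw [Equiv.swap_comm k.succ d.succ, ← h, ← mul_assoc, ← mul_assoc, Equiv.swap_mul_self,
    one_mul, Equiv.swap_comm k.succ 0]

def g (m b : ℕ) : Alg (m+1) := 1 - ((b+1 : ℕ) : ℂ)⁻¹ • MonoidAlgebra.of ℂ _ (w m b)

lemma of_w_mul {m k d : ℕ} (hk : k < m) (hd : d < m) (hkd : k ≠ d) :
    MonoidAlgebra.of ℂ _ (w m k) * (MonoidAlgebra.of ℂ _ (w m d) * ι m (Alt m))
      = -(MonoidAlgebra.of ℂ _ (w m d) * ι m (Alt m)) := by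
  have hfin : (⟨k, hk⟩ : Fin m) ≠ ⟨d, hd⟩ := by simp [Fin.ext_iff, hkd]
  rw [← mul_assoc, ← map_mul, w_eq hk, w_eq hd, swap_succ_comm hfin, ← emb_swap,
    map_mul, mul_assoc, absorb', Equiv.Perm.sign_swap hfin]
  simp [← w_eq hd]

lemma main_ind (m : ℕ) : ∀ k, k ≤ m →
    ((((List.range k).map (g m)).prod * ι m (Alt m)
        = ι m (Alt m) - ∑ b ∈ Finset.range k, MonoidAlgebra.of ℂ _ (w m b) * ι m (Alt m))
    ∧ ∀ d, k ≤ d → d < m →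
      ((List.range k).map (g m)).prod * (MonoidAlgebra.of ℂ _ (w m d) * ι m (Alt m))
        = ((k+1 : ℕ) : ℂ) • (MonoidAlgebra.of ℂ _ (w m d) * ι m (Alt m))) := by
  intro k
  induction k with
  | zero => simp
  | succ k IH =>
    intro hk
    obtain ⟨hP, hQ⟩ := IH (by omega)
    have hk1 : ((k+1 : ℕ) : ℂ) ≠ 0 := by exact_mod_cast Nat.succ_ne_zero k
    have hprod : ((List.range (k+1)).map (g m)).prod
        = ((List.range k).map (g m)).prod * g m k := by
      rw [List.range_succ, List.map_append, List.prod_append]; simp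
    constructor
    · rw [hprod, mul_assoc]
      have hg : g m k * ι m (Alt m)
          = ι m (Alt m) - ((k+1 : ℕ) : ℂ)⁻¹ • (MonoidAlgebra.of ℂ _ (w m k) * ι m (Alt m)) := by
        rw [g, sub_mul, one_mul, smul_mul_assoc]
      rw [hg, mul_sub, hP, mul_smul_comm, hQ k le_rfl (by omega), smul_smul,
        inv_mul_cancel₀ hk1, one_smul, Finset.sum_range_succ]
      abel
    · intro d hd hdm
      have hg : g m k * (MonoidAlgebra.of ℂ _ (w m d) * ι m (Alt m))
          = (1 + ((k+1 : ℕ) : ℂ)⁻¹) • (MonoidAlgebra.of ℂ _ (w m d) * ι m (Alt m)) := by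
        rw [g, sub_mul, one_mul, smul_mul_assoc,
          of_w_mul (by omega) hdm (by omega), smul_neg, sub_neg_eq_add, add_smul, one_smul]
      rw [hprod, mul_assoc, hg, mul_smul_comm, hQ d (by omega) hdm, smul_smul]
      congr 1
      rw [add_mul, one_mul, inv_mul_cancel₀ hk1]
      push_cast
      ring


lemma decompose_symm_eq (p : Fin (m+1)) (τ : Equiv.Perm (Fin m)) :
    Equiv.Perm.decomposeFin.symm (p, τ) = Equiv.swap 0 p * emb m τ := by
  ext x
  refine Fin.cases ?_ ?_ x
  · simp [Equiv.Perm.decomposeFin_symm_apply_zero]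
  · intro y
    simp [Equiv.Perm.decomposeFin_symm_apply_succ]

lemma w_val_fin {m : ℕ} (b : Fin m) : w m (b : ℕ) = Equiv.swap 0 b.succ := by
  rw [w_eq b.isLt]

lemma Alt_succ (m : ℕ) :
    Alt (m+1) = ι m (Alt m)
      - ∑ b ∈ Finset.range m, MonoidAlgebra.of ℂ _ (w m b) * ι m (Alt m) := by
  rw [Alt]
  rw [Fintype.sum_equiv Equiv.Perm.decomposeFin
    (fun σ => ((Equiv.Perm.sign σ : ℤ) : ℂ) • MonoidAlgebra.of ℂ _ σ)
    (fun q => ((Equiv.Perm.sign (Equiv.Perm.decomposeFin.symm q) : ℤ) : ℂ) •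
      MonoidAlgebra.of ℂ _ (Equiv.Perm.decomposeFin.symm q))
    (fun σ => by simp)]
  rw [Fintype.sum_prod_type, Fin.sum_univ_succ]
  have h0 : ∀ τ : Equiv.Perm (Fin m),
      Equiv.Perm.decomposeFin.symm ((0 : Fin (m+1)), τ) = emb m τ := fun τ => by
    rw [decompose_symm_eq]; simp; rfl
  have hterm0 : (∑ τ : Equiv.Perm (Fin m),
      ((Equiv.Perm.sign (Equiv.Perm.decomposeFin.symm ((0 : Fin (m+1)), τ)) : ℤ) : ℂ) •
        MonoidAlgebra.of ℂ _ (Equiv.Perm.decomposeFin.symm ((0 : Fin (m+1)), τ)))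
      = ι m (Alt m) := by
    rw [iota_Alt]
    refine Finset.sum_congr rfl fun τ _ => ?_
    rw [h0, sign_emb]
  rw [hterm0]
  have hterm : ∀ b : Fin m, (∑ τ : Equiv.Perm (Fin m),
      ((Equiv.Perm.sign (Equiv.Perm.decomposeFin.symm (b.succ, τ)) : ℤ) : ℂ) •
        MonoidAlgebra.of ℂ _ (Equiv.Perm.decomposeFin.symm (b.succ, τ)))
      = -(MonoidAlgebra.of ℂ _ (w m (b : ℕ)) * ι m (Alt m)) := by
    intro b
    rw [iota_Alt, Finset.mul_sum, ← Finset.sum_neg_distrib]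
    refine Finset.sum_congr rfl fun τ _ => ?_
    rw [Equiv.Perm.decomposeFin.symm_sign, decompose_symm_eq, w_val_fin, map_mul,
      mul_smul_comm]
    simp [Fin.succ_ne_zero, neg_smul, smul_smul]
  rw [Finset.sum_congr rfl fun b _ => hterm b]
  rw [Finset.sum_neg_distrib, ← Fin.sum_univ_eq_sum_range
    (fun b => MonoidAlgebra.of ℂ _ (w m b) * ι m (Alt m)) m]
  abel



lemma block2 {m : ℕ} (A B : List (Fin m)) :
    ((A.map Fin.succ) ×ˢ ((0 : Fin (m+1)) :: B.map Fin.succ)).filter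
        (fun p => decide (p.1 < p.2))
      = ((A ×ˢ B).filter (fun p => decide (p.1 < p.2))).map
          (Prod.map Fin.succ Fin.succ) := by
  induction A with
  | nil => simp
  | cons a A ih =>
    rw [List.map_cons, List.product_cons, List.product_cons, List.filter_append,
      List.filter_append, List.map_append, ih]
    congr 1
    rw [List.map_cons, List.filter_cons]
    simp only [decide_eq_true_eq]
    rw [if_neg (by simp), List.map_map, List.filter_map, List.filter_map, List.map_map]
    congr 1
    exact List.filter_congr fun b _ => by
      simp [Fin.succ_lt_succ_iff, decide_eq_decide]


lemma lexPairs_succ (m : ℕ) :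
    lexPairs (m+1) = ((List.finRange m).map fun b => ((0 : Fin (m+1)), b.succ))
      ++ (lexPairs m).map (Prod.map Fin.succ Fin.succ) := by
  rw [lexPairs, List.finRange_succ, List.product_cons, List.filter_append]
  congr 1
  · rw [List.map_cons, List.filter_cons]
    rw [if_neg (by simp), List.map_map, List.filter_map]
    rw [List.filter_eq_self.mpr fun b _ => by simp [Fin.succ_pos]]
    rfl
  · exact block2 _ _

def factor (m : ℕ) (p : Fin m × Fin m) : Alg m :=
  1 - (((p.2 : ℕ) - (p.1 : ℕ) : ℕ) : ℂ)⁻¹ •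
    MonoidAlgebra.of ℂ _ (Equiv.swap p.1 p.2)

lemma factor_emb (m : ℕ) (p : Fin m × Fin m) :
    factor (m+1) (Prod.map Fin.succ Fin.succ p) = ι m (factor m p) := by
  rw [factor, factor, map_sub, map_one, map_smul, ι_of, emb_swap]
  simp [Nat.succ_sub_succ]

lemma prod_factor (m : ℕ) : ((lexPairs m).map (factor m)).prod = Alt m := by
  induction m with
  | zero =>
    have h : lexPairs 0 = [] := rfl
    rw [h, List.map_nil, List.prod_nil, Alt, Finset.univ_unique, Finset.sum_singleton]
    have : (default : Equiv.Perm (Fin 0)) = 1 := Subsingleton.elim _ _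
    rw [this]
    simp [MonoidAlgebra.one_def]
  | succ m IH =>
    rw [lexPairs_succ, List.map_append, List.prod_append, List.map_map, List.map_map]
    have h1 : ((List.finRange m).map ((factor (m+1)) ∘ fun b => ((0 : Fin (m+1)), b.succ)))
        = (List.range m).map (g m) := by
      apply List.ext_getElem
      · simp
      · intro i h h'
        simp only [List.getElem_map, List.getElem_finRange, List.getElem_range,
          Function.comp_apply]
        have hi : i < m := by simpa using h
        rw [g, w_eq hi, factor]
        simp [Fin.ext_iff]
    have h2 : ((lexPairs m).map ((factor (m+1)) ∘ Prod.map Fin.succ Fin.succ))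
        = (lexPairs m).map ((ι m) ∘ (factor m)) := by
      refine List.map_congr_left fun p _ => ?_
      exact factor_emb m p
    rw [h1, h2, ← List.map_map, ← map_list_prod (ι m), IH,
      (main_ind m m le_rfl).1, ← Alt_succ]

end CF

/-- Fusion procedure for the column tableau: in the group algebra `ℂ[S_m]`,
`∏_{1 ≤ a < b ≤ m} (1 - (a b)/(b-a)) = m! a^{(m)}`, the product being taken
in lexicographic order on the pairs `(a,b)`, with `(a b)` the transposition
and contents `c_a = -(a-1)`, `h((1^m)) = m!`. -/
theorem column_fusion (m : ℕ) :
    ((lexPairs m).map fun p =>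
        (1 : MonoidAlgebra ℂ (Equiv.Perm (Fin m))) -
          (((p.2 : ℕ) - (p.1 : ℕ) : ℕ) : ℂ)⁻¹ •
            MonoidAlgebra.of ℂ (Equiv.Perm (Fin m)) (Equiv.swap p.1 p.2)).prod =
      (m.factorial : ℂ) • antisym m := by
  have hfac : (m.factorial : ℂ) ≠ 0 := Nat.cast_ne_zero.mpr m.factorial_ne_zero
  rw [antisym, smul_smul, mul_inv_cancel₀ hfac, one_smul]
  exact CF.prod_factor m

end
end
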